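/- Mean-squared error bound for iterate-averaged 3DVAR in the simultaneously diagonalized case: under the diagonal setup, fix γ > 0, suppose Σ_{i=1}^∞ i^{2β} v_{0,i}² < ∞, and let τ_b, τ_v ∈ [0,1] satisfy τ_b ≤ (t(1+2ε) + 2β)/(2(1 + 2ε + 2p)) and τ_v < (t(1+2ε) + 2ε)/(1 + 2ε + 2p). Then there exists a constant C > 0 such that for every n ≥ 1 and the given α, the mean-squared error B_n(α) + V_n(α) ≤ C ( (n/α)^{−2τ_b} + (γ²/α)(n/α)^{−τ_v} ), where B_n(α) = (α/n)² Σ_{i=1}^∞ σ_i^t q_{n,α}(σ_i a_i²)² v_{0,i}² and V_n(α) = (γ²/n²) Σ_{j=1}^{n} Σ_{i=1}^∞ σ_i^{t+2} a_i² q_{j,α}(σ_i a_i²)². In particular the iterate-averaged 3DVAR converges in mean square in the ‖·‖_t norm for every fixed α > 0 whenever τ_b and τ_v can be chosen positive. -/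

import Mathlib

open Finset

/-- `q_{n,α}(λ) = λ⁻¹ (1 − (α/(α+λ))^n)`. -/
noncomputable def qFun (n : ℕ) (α l : ℝ) : ℝ := l⁻¹ * (1 - (α / (α + l)) ^ n)

/-- Squared bias of iterate-averaged 3DVAR in the diagonal case (sequences are 1-based):
`B_n(α) = (α/n)² Σ_{i≥1} σ_i^t q_{n,α}(σ_i a_i²)² v_{0,i}²`. -/
noncomputable def Bterm (σ a v0 : ℕ → ℝ) (t : ℝ) (α : ℝ) (n : ℕ) : ℝ :=
  (α / (n : ℝ)) ^ 2 *
    ∑' i : ℕ, (σ (i + 1)) ^ t * (qFun n α (σ (i + 1) * (a (i + 1)) ^ 2)) ^ 2 * (v0 (i + 1)) ^ 2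

/-- Variance term of iterate-averaged 3DVAR in the diagonal case (sequences are 1-based):
`V_n(α) = (γ²/n²) Σ_{j=1}^n Σ_{i≥1} σ_i^{t+2} a_i² q_{j,α}(σ_i a_i²)²`. -/
noncomputable def Vterm (σ a : ℕ → ℝ) (t γ : ℝ) (α : ℝ) (n : ℕ) : ℝ :=
  (γ ^ 2 / (n : ℝ) ^ 2) *
    ∑ j ∈ Icc 1 n, ∑' i : ℕ,
      (σ (i + 1)) ^ (t + 2) * (a (i + 1)) ^ 2 * (qFun j α (σ (i + 1) * (a (i + 1)) ^ 2)) ^ 2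

/-!
With `λ = σ a²`, the filter factor satisfies `q_{n,α}(λ) ≤ λ⁻¹` and, by Bernoulli's inequality,
`q_{n,α}(λ) ≤ n/α`; splitting `q² = q^θ q^{2-θ}` gives `q² ≤ λ^{-θ} (n/α)^{2-θ}` for `0 ≤ θ ≤ 2`.
Take `θ = 2τ_b` in the bias and `θ = 1 + τ_v` in the variance. What remains of the `i`-th
term is a product of powers of `σ_i`, `a_i`, hence comparable to a power of `i`: the restriction
on `τ_b` makes it `O(i^{2β})`, so the bias series is dominated by `Σ i^{2β} v_{0,i}²`, and the
restriction on `τ_v` makes the variance weights `O(i^{-r})` with `r > 1`. Averaging over `j ≤ n`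
costs a factor `n`, which turns `(n/α)^{1-τ_v}/n` into `α⁻¹ (n/α)^{-τ_v}`.
-/

section qFun

variable {α l : ℝ}

lemma qFun_nonneg (n : ℕ) (hα : 0 < α) (hl : 0 < l) : 0 ≤ qFun n α l := by
  have hx : α / (α + l) ≤ 1 := (div_le_one (by linarith)).mpr (by linarith)
  exact mul_nonneg (inv_nonneg.mpr hl.le) (sub_nonneg.mpr (pow_le_one₀ (by positivity) hx))

lemma qFun_le_inv (n : ℕ) (hα : 0 < α) (hl : 0 < l) : qFun n α l ≤ l⁻¹ :=
  mul_le_of_le_one_right (inv_nonneg.mpr hl.le) (sub_le_self _ (by positivity))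

lemma qFun_le_div (n : ℕ) (hα : 0 < α) (hl : 0 < l) : qFun n α l ≤ n / α := by
  have hx : -1 ≤ α / (α + l) := by linarith [show 0 ≤ α / (α + l) by positivity]
  have bernoulli : 1 - (α / (α + l)) ^ n ≤ n * (l / (α + l)) := by
    have := one_add_mul_sub_le_pow hx n
    rw [show α / (α + l) - 1 = -(l / (α + l)) by field_simp; ring] at this
    linarith
  calc qFun n α l ≤ l⁻¹ * (n * (l / (α + l))) := mul_le_mul_of_nonneg_left bernoulli (by positivity)
    _ = n / (α + l) := by field_simp
    _ ≤ n / α := div_le_div_of_nonneg_left (Nat.cast_nonneg n) hα (by linarith)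

lemma qFun_sq_le (n : ℕ) (hα : 0 < α) (hl : 0 < l) {θ : ℝ} (hθ0 : 0 ≤ θ) (hθ2 : θ ≤ 2) :
    qFun n α l ^ 2 ≤ l ^ (-θ) * ((n : ℝ) / α) ^ (2 - θ) := by
  have hq := qFun_nonneg n hα hl
  calc qFun n α l ^ 2 = qFun n α l ^ (θ + (2 - θ)) := by norm_num
    _ = qFun n α l ^ θ * qFun n α l ^ (2 - θ) := Real.rpow_add' hq (by norm_num)
    _ ≤ l⁻¹ ^ θ * ((n : ℝ) / α) ^ (2 - θ) := by
        gcongr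
        exacts [qFun_le_inv n hα hl, qFun_le_div n hα hl]
    _ = l ^ (-θ) * ((n : ℝ) / α) ^ (2 - θ) := by rw [Real.inv_rpow hl.le, Real.rpow_neg hl.le]

lemma div_sq_mul_qFun_sq_le {n : ℕ} (hn : 1 ≤ n) (hα : 0 < α) (hl : 0 < l) {θ : ℝ}
    (hθ0 : 0 ≤ θ) (hθ2 : θ ≤ 2) :
    (α / n) ^ 2 * qFun n α l ^ 2 ≤ ((n : ℝ) / α) ^ (-θ) * l ^ (-θ) := by
  have hN : 0 < (n : ℝ) / α := div_pos (by exact_mod_cast hn) hα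
  calc (α / n) ^ 2 * qFun n α l ^ 2 ≤ (α / n) ^ 2 * (l ^ (-θ) * ((n : ℝ) / α) ^ (2 - θ)) := by
        gcongr; exact qFun_sq_le n hα hl hθ0 hθ2
    _ = ((n : ℝ) / α) ^ (-θ) * l ^ (-θ) := by
        rw [Real.rpow_sub hN, Real.rpow_neg hN.le, Real.rpow_two, ← inv_div]
        field_simp

end qFun

def IsPowerLaw (y : ℕ → ℝ) (e : ℝ) : Prop :=
  ∃ c₁ c₂ : ℝ, 0 < c₁ ∧ ∀ i : ℕ, c₁ * ((i : ℝ) + 1) ^ e ≤ y i ∧ y i ≤ c₂ * ((i : ℝ) + 1) ^ e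

lemma isPowerLaw_succ {y : ℕ → ℝ} {e c₁ c₂ : ℝ} (hc₁ : 0 < c₁)
    (hy : ∀ i : ℕ, 1 ≤ i → c₁ * (i : ℝ) ^ e ≤ y i ∧ y i ≤ c₂ * (i : ℝ) ^ e) :
    IsPowerLaw (fun i => y (i + 1)) e :=
  ⟨c₁, c₂, hc₁, fun i => by exact_mod_cast hy (i + 1) (Nat.le_add_left 1 i)⟩

namespace IsPowerLaw

variable {y z : ℕ → ℝ} {e f : ℝ}

lemma pos (hy : IsPowerLaw y e) (i : ℕ) : 0 < y i := by
  obtain ⟨c₁, _, hc₁, hb⟩ := hy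
  exact lt_of_lt_of_le (by positivity) (hb i).1

lemma mul (hy : IsPowerLaw y e) (hz : IsPowerLaw z f) :
    IsPowerLaw (fun i => y i * z i) (e + f) := by
  obtain ⟨c₁, c₂, hc₁, hby⟩ := hy
  obtain ⟨d₁, d₂, hd₁, hbz⟩ := hz
  refine ⟨c₁ * d₁, c₂ * d₂, mul_pos hc₁ hd₁, fun i => ?_⟩
  have hx : (0 : ℝ) < i + 1 := by positivity
  have hy0 : 0 ≤ y i := le_trans (by positivity) (hby i).1
  have hz0 : 0 ≤ z i := le_trans (by positivity) (hbz i).1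
  rw [Real.rpow_add hx]
  constructor
  · calc c₁ * d₁ * ((i + 1) ^ e * (i + 1) ^ f) = (c₁ * (i + 1) ^ e) * (d₁ * (i + 1) ^ f) := by ring
      _ ≤ y i * z i := mul_le_mul (hby i).1 (hbz i).1 (by positivity) hy0
  · calc y i * z i ≤ (c₂ * (i + 1) ^ e) * (d₂ * (i + 1) ^ f) :=
          mul_le_mul (hby i).2 (hbz i).2 hz0 (hy0.trans (hby i).2)
      _ = c₂ * d₂ * ((i + 1) ^ e * (i + 1) ^ f) := by ring

lemma rpow (hy : IsPowerLaw y e) (s : ℝ) : IsPowerLaw (fun i => y i ^ s) (e * s) := by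
  obtain ⟨c₁, c₂, hc₁, hb⟩ := hy
  have hc₂ : 0 < c₂ := by
    have := (hb 0).1.trans (hb 0).2
    norm_num at this
    linarith
  refine ⟨min (c₁ ^ s) (c₂ ^ s), max (c₁ ^ s) (c₂ ^ s), by positivity, fun i => ?_⟩
  have hx : (0 : ℝ) < i + 1 := by positivity
  have hpow (c : ℝ) (hc : 0 < c) : (c * (i + 1) ^ e) ^ s = c ^ s * (i + 1) ^ (e * s) := by
    rw [Real.mul_rpow hc.le (by positivity), ← Real.rpow_mul hx.le]
  have hlo : 0 < c₁ * ((i : ℝ) + 1) ^ e := by positivity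
  rcases le_total 0 s with hs | hs
  · constructor
    · calc min (c₁ ^ s) (c₂ ^ s) * (i + 1) ^ (e * s) ≤ (c₁ * (i + 1) ^ e) ^ s := by
            rw [hpow c₁ hc₁]; gcongr; exact min_le_left _ _
        _ ≤ y i ^ s := Real.rpow_le_rpow hlo.le (hb i).1 hs
    · calc y i ^ s ≤ (c₂ * (i + 1) ^ e) ^ s := Real.rpow_le_rpow (hlo.le.trans (hb i).1) (hb i).2 hs
        _ ≤ max (c₁ ^ s) (c₂ ^ s) * (i + 1) ^ (e * s) := by
            rw [hpow c₂ hc₂]; gcongr; exact le_max_right _ _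
  · constructor
    · calc min (c₁ ^ s) (c₂ ^ s) * (i + 1) ^ (e * s) ≤ (c₂ * (i + 1) ^ e) ^ s := by
            rw [hpow c₂ hc₂]; gcongr; exact min_le_right _ _
        _ ≤ y i ^ s := Real.rpow_le_rpow_of_nonpos (hlo.trans_le (hb i).1) (hb i).2 hs
    · calc y i ^ s ≤ (c₁ * (i + 1) ^ e) ^ s := Real.rpow_le_rpow_of_nonpos hlo (hb i).1 hs
        _ ≤ max (c₁ ^ s) (c₂ ^ s) * (i + 1) ^ (e * s) := by
            rw [hpow c₁ hc₁]; gcongr; exact le_max_left _ _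

lemma pow (hy : IsPowerLaw y e) (k : ℕ) : IsPowerLaw (fun i => y i ^ k) (e * k) := by
  simpa only [Real.rpow_natCast] using hy.rpow k

lemma le_mul_rpow_of_le (hy : IsPowerLaw y e) (hef : e ≤ f) :
    ∃ K, ∀ i : ℕ, y i ≤ K * ((i : ℝ) + 1) ^ f := by
  obtain ⟨c₁, c₂, hc₁, hb⟩ := hy
  refine ⟨max c₂ 0, fun i => ?_⟩
  have hx : (1 : ℝ) ≤ i + 1 := by simp
  calc y i ≤ c₂ * ((i : ℝ) + 1) ^ e := (hb i).2
    _ ≤ max c₂ 0 * ((i : ℝ) + 1) ^ e := by gcongr; exact le_max_left _ _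
    _ ≤ max c₂ 0 * ((i : ℝ) + 1) ^ f := by gcongr

lemma summable_mul_of_le (hy : IsPowerLaw y e) (hef : e ≤ f) {v : ℕ → ℝ} (hv0 : ∀ i, 0 ≤ v i)
    (hv : Summable fun i : ℕ => ((i : ℝ) + 1) ^ f * v i) : Summable fun i => y i * v i := by
  obtain ⟨K, hK⟩ := hy.le_mul_rpow_of_le hef
  refine Summable.of_nonneg_of_le (fun i => mul_nonneg (hy.pos i).le (hv0 i)) (fun i => ?_)
    (hv.mul_left K)
  rw [← mul_assoc]
  exact mul_le_mul_of_nonneg_right (hK i) (hv0 i)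

lemma summable (hy : IsPowerLaw y e) (he : e < -1) : Summable y := by
  obtain ⟨K, hK⟩ := hy.le_mul_rpow_of_le le_rfl
  have hsum : Summable fun i : ℕ => ((i : ℝ) + 1) ^ e := by
    simpa using (summable_nat_add_iff 1).mpr (Real.summable_nat_rpow.mpr he)
  exact Summable.of_nonneg_of_le (fun i => (hy.pos i).le) hK (hsum.mul_left K)

end IsPowerLaw

lemma tsum_le_mul_tsum_of_le {f g : ℕ → ℝ} {c : ℝ} (hf : ∀ i, 0 ≤ f i)
    (hfg : ∀ i, f i ≤ c * g i) (hg : Summable g) : ∑' i, f i ≤ c * ∑' i, g i := by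
  rw [← tsum_mul_left]
  exact (Summable.of_nonneg_of_le hf hfg (hg.mul_left c)).tsum_le_tsum hfg (hg.mul_left c)

section Terms

variable {σ a : ℕ → ℝ} {t α : ℝ}

lemma Bterm_le {v0 : ℕ → ℝ} (hα : 0 < α) (hσ : ∀ i, 0 ≤ σ (i + 1))
    (hl : ∀ i, 0 < σ (i + 1) * a (i + 1) ^ 2) {θ : ℝ} (hθ0 : 0 ≤ θ) (hθ2 : θ ≤ 2)
    (hsum : Summable fun i => σ (i + 1) ^ t * (σ (i + 1) * a (i + 1) ^ 2) ^ (-θ) * v0 (i + 1) ^ 2)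
    {n : ℕ} (hn : 1 ≤ n) :
    Bterm σ a v0 t α n ≤ ((n : ℝ) / α) ^ (-θ) *
      ∑' i, σ (i + 1) ^ t * (σ (i + 1) * a (i + 1) ^ 2) ^ (-θ) * v0 (i + 1) ^ 2 := by
  rw [Bterm, ← tsum_mul_left]
  refine tsum_le_mul_tsum_of_le (fun i => by have := hσ i; positivity) (fun i => ?_) hsum
  have hq := div_sq_mul_qFun_sq_le hn hα (hl i) hθ0 hθ2
  have hw : 0 ≤ σ (i + 1) ^ t * v0 (i + 1) ^ 2 := by have := hσ i; positivity
  calc (α / n) ^ 2 * (σ (i + 1) ^ t * qFun n α (σ (i + 1) * a (i + 1) ^ 2) ^ 2 * v0 (i + 1) ^ 2)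
      = σ (i + 1) ^ t * v0 (i + 1) ^ 2 *
          ((α / n) ^ 2 * qFun n α (σ (i + 1) * a (i + 1) ^ 2) ^ 2) := by ring
    _ ≤ σ (i + 1) ^ t * v0 (i + 1) ^ 2 *
          (((n : ℝ) / α) ^ (-θ) * (σ (i + 1) * a (i + 1) ^ 2) ^ (-θ)) :=
        mul_le_mul_of_nonneg_left hq hw
    _ = ((n : ℝ) / α) ^ (-θ) *
          (σ (i + 1) ^ t * (σ (i + 1) * a (i + 1) ^ 2) ^ (-θ) * v0 (i + 1) ^ 2) := by ring

lemma Vterm_le {γ : ℝ} (hα : 0 < α) (hσ : ∀ i, 0 ≤ σ (i + 1))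
    (hl : ∀ i, 0 < σ (i + 1) * a (i + 1) ^ 2) {s : ℝ} (hs0 : -1 ≤ s) (hs1 : s ≤ 1)
    (hsum : Summable fun i =>
      σ (i + 1) ^ (t + 2) * a (i + 1) ^ 2 * (σ (i + 1) * a (i + 1) ^ 2) ^ (-(1 + s)))
    {n : ℕ} (hn : 1 ≤ n) :
    Vterm σ a t γ α n ≤ γ ^ 2 / α * ((n : ℝ) / α) ^ (-s) *
      ∑' i, σ (i + 1) ^ (t + 2) * a (i + 1) ^ 2 * (σ (i + 1) * a (i + 1) ^ 2) ^ (-(1 + s)) := by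
  set W := ∑' i, σ (i + 1) ^ (t + 2) * a (i + 1) ^ 2 * (σ (i + 1) * a (i + 1) ^ 2) ^ (-(1 + s))
  have hN : 0 < (n : ℝ) / α := div_pos (by exact_mod_cast hn) hα
  have hinner : ∀ j ∈ Icc 1 n, ∑' i, σ (i + 1) ^ (t + 2) * a (i + 1) ^ 2 *
      qFun j α (σ (i + 1) * a (i + 1) ^ 2) ^ 2 ≤ ((n : ℝ) / α) ^ (1 - s) * W := by
    intro j hj
    have hjn : (j : ℝ) / α ≤ n / α := by gcongr; exact_mod_cast (mem_Icc.mp hj).2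
    refine tsum_le_mul_tsum_of_le (fun i => by have := hσ i; positivity) (fun i => ?_) hsum
    have hw : 0 ≤ σ (i + 1) ^ (t + 2) * a (i + 1) ^ 2 := by have := hσ i; positivity
    have hq := qFun_sq_le j hα (hl i) (θ := 1 + s) (by linarith) (by linarith)
    rw [show 2 - (1 + s) = 1 - s by ring] at hq
    calc σ (i + 1) ^ (t + 2) * a (i + 1) ^ 2 * qFun j α (σ (i + 1) * a (i + 1) ^ 2) ^ 2
        ≤ σ (i + 1) ^ (t + 2) * a (i + 1) ^ 2 *
            ((σ (i + 1) * a (i + 1) ^ 2) ^ (-(1 + s)) * ((n : ℝ) / α) ^ (1 - s)) := by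
          refine mul_le_mul_of_nonneg_left (hq.trans ?_) hw
          have := hl i
          gcongr
      _ = ((n : ℝ) / α) ^ (1 - s) * (σ (i + 1) ^ (t + 2) * a (i + 1) ^ 2 *
            (σ (i + 1) * a (i + 1) ^ 2) ^ (-(1 + s))) := by ring
  calc Vterm σ a t γ α n ≤ γ ^ 2 / n ^ 2 * (n * (((n : ℝ) / α) ^ (1 - s) * W)) := by
        rw [Vterm]
        gcongr
        simpa using sum_le_card_nsmul _ _ _ hinner
    _ = γ ^ 2 / α * ((n : ℝ) / α) ^ (-s) * W := by
        rw [Real.rpow_sub hN, Real.rpow_neg hN.le, Real.rpow_one]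
        field_simp

end Terms

theorem diagonal_mse_bound_general
    (ε p α t β γ : ℝ) (hε : 0 < ε) (hp : 0 < p) (hα : 0 < α)
    (σ a v0 : ℕ → ℝ) (c₁ c₂ : ℝ) (hc₁ : 0 < c₁)
    (hσ : ∀ i : ℕ, 1 ≤ i → c₁ * (i : ℝ) ^ (-1 - 2 * ε) ≤ σ i ∧ σ i ≤ c₂ * (i : ℝ) ^ (-1 - 2 * ε))
    (ha : ∀ i : ℕ, 1 ≤ i → c₁ * (i : ℝ) ^ (-p) ≤ a i ∧ a i ≤ c₂ * (i : ℝ) ^ (-p))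
    (hv : Summable (fun i : ℕ => ((i : ℝ) + 1) ^ (2 * β) * (v0 (i + 1)) ^ 2))
    (τb τv : ℝ) (hτb0 : 0 ≤ τb) (hτb1 : τb ≤ 1) (hτv0 : 0 ≤ τv) (hτv1 : τv ≤ 1)
    (hτb : τb ≤ (t * (1 + 2 * ε) + 2 * β) / (2 * (1 + 2 * ε + 2 * p)))
    (hτv : τv < (t * (1 + 2 * ε) + 2 * ε) / (1 + 2 * ε + 2 * p)) :
    ∃ C : ℝ, 0 < C ∧ ∀ n : ℕ, 1 ≤ n →
      Bterm σ a v0 t α n + Vterm σ a t γ α n ≤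
        C * (((n : ℝ) / α) ^ (-(2 * τb)) + (γ ^ 2 / α) * ((n : ℝ) / α) ^ (-τv)) := by
  have hM : 0 < 1 + 2 * ε + 2 * p := by linarith
  rw [le_div_iff₀ (by linarith)] at hτb
  rw [lt_div_iff₀ hM] at hτv
  have hσ' := isPowerLaw_succ hc₁ hσ
  have ha' := isPowerLaw_succ hc₁ ha
  have hl : IsPowerLaw (fun i => σ (i + 1) * a (i + 1) ^ 2) (-(1 + 2 * ε + 2 * p)) := by
    convert hσ'.mul (ha'.pow 2) using 1; push_cast; ring
  have hBsum := ((hσ'.rpow t).mul (hl.rpow (-(2 * τb)))).summable_mul_of_le (f := 2 * β)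
    (by nlinarith) (fun i => sq_nonneg (v0 (i + 1))) hv
  have hVsum := (((hσ'.rpow (t + 2)).mul (ha'.pow 2)).mul (hl.rpow (-(1 + τv)))).summable
    (by push_cast; nlinarith)
  set CB := ∑' i, σ (i + 1) ^ t * (σ (i + 1) * a (i + 1) ^ 2) ^ (-(2 * τb)) * v0 (i + 1) ^ 2
  set CV := ∑' i, σ (i + 1) ^ (t + 2) * a (i + 1) ^ 2 *
    (σ (i + 1) * a (i + 1) ^ 2) ^ (-(1 + τv))
  have hCB : 0 ≤ CB := tsum_nonneg fun i => by have := hσ'.pos i; have := hl.pos i; positivity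
  have hCV : 0 ≤ CV := tsum_nonneg fun i => by have := hσ'.pos i; have := hl.pos i; positivity
  refine ⟨CB + CV + 1, by positivity, fun n hn => ?_⟩
  have hX : 0 ≤ ((n : ℝ) / α) ^ (-(2 * τb)) := by positivity
  have hY : 0 ≤ γ ^ 2 / α * ((n : ℝ) / α) ^ (-τv) := by positivity
  calc Bterm σ a v0 t α n + Vterm σ a t γ α n
      ≤ ((n : ℝ) / α) ^ (-(2 * τb)) * CB + γ ^ 2 / α * ((n : ℝ) / α) ^ (-τv) * CV :=
        add_le_add
          (Bterm_le hα (fun i => (hσ'.pos i).le) hl.pos (by linarith) (by linarith) hBsum hn)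
          (Vterm_le hα (fun i => (hσ'.pos i).le) hl.pos (by linarith) hτv1 hVsum hn)
    _ ≤ _ := by nlinarith [mul_nonneg hCB hY, mul_nonneg hCV hX]

/-- Mean-squared error bound for iterate-averaged 3DVAR in the simultaneously
diagonalized case: if `Σ i^{2β} v_{0,i}² < ∞`, `τ_b, τ_v ∈ [0,1]`,
`τ_b ≤ (t(1+2ε)+2β)/(2(1+2ε+2p))` and `τ_v < (t(1+2ε)+2ε)/(1+2ε+2p)`, then
`B_n(α) + V_n(α) ≤ C ((n/α)^{−2τ_b} + (γ²/α)(n/α)^{−τ_v})`. -/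
theorem diagonal_mse_bound
    (ε p α t β γ : ℝ) (hε : 0 < ε) (hp : 0 < p) (hα : 0 < α) (ht : 0 ≤ t) (hβ : 0 ≤ β)
    (hγ : 0 < γ)
    (σ a v0 : ℕ → ℝ) (c₁ c₂ : ℝ) (hc₁ : 0 < c₁) (hc₁₂ : c₁ ≤ c₂)
    (hσ : ∀ i : ℕ, 1 ≤ i → c₁ * (i : ℝ) ^ (-1 - 2 * ε) ≤ σ i ∧ σ i ≤ c₂ * (i : ℝ) ^ (-1 - 2 * ε))
    (ha : ∀ i : ℕ, 1 ≤ i → c₁ * (i : ℝ) ^ (-p) ≤ a i ∧ a i ≤ c₂ * (i : ℝ) ^ (-p))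
    (hv : Summable (fun i : ℕ => ((i : ℝ) + 1) ^ (2 * β) * (v0 (i + 1)) ^ 2))
    (τb τv : ℝ) (hτb0 : 0 ≤ τb) (hτb1 : τb ≤ 1) (hτv0 : 0 ≤ τv) (hτv1 : τv ≤ 1)
    (hτb : τb ≤ (t * (1 + 2 * ε) + 2 * β) / (2 * (1 + 2 * ε + 2 * p)))
    (hτv : τv < (t * (1 + 2 * ε) + 2 * ε) / (1 + 2 * ε + 2 * p)) :
    ∃ C : ℝ, 0 < C ∧ ∀ n : ℕ, 1 ≤ n →
      Bterm σ a v0 t α n + Vterm σ a t γ α n ≤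
        C * (((n : ℝ) / α) ^ (-(2 * τb)) + (γ ^ 2 / α) * ((n : ℝ) / α) ^ (-τv)) :=
  diagonal_mse_bound_general ε p α t β γ hε hp hα σ a v0 c₁ c₂ hc₁ hσ ha hv τb τv hτb0 hτb1 hτv0
    hτv1 hτb hτv
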